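/- Let a ∈ ℝⁿ with a ≥ 0 entrywise and let B be an entrywise nonnegative n×n×n tensor. Suppose x = a + Bx² has a nonnegative solution, and that its minimal nonnegative solution m satisfies m > 0 entrywise. Define F(x) = a + Bx² − x and R_x = I − Bx: − B:x, and consider the Newton iteration x_0 = 0, x_{k+1} = x_k + R_{x_k}⁻¹F(x_k). Then the iteration is well defined (each R_{x_k} is invertible with R_{x_k}⁻¹ ≥ 0 entrywise), F(x_k) ≥ 0 entrywise for every k, the iterates satisfy 0 = x_0 ≤ x_1 ≤ x_2 ≤ ⋯ ≤ m entrywise, and x_k converges to m. -/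

import Mathlib

/-!
Newton's method approaches `m` from below. The Taylor identity `F(x + h) = F(x) - R_x h + Bh²`
shows that a step from `0 ≤ x ≤ m` with `F(x) ≥ 0` lands at some `y` with `x ≤ y ≤ m` and
`F(y) = B(y - x)² ≥ 0`, provided `R_x = I - (Bx: + B:x)` is a nonsingular M-matrix, i.e. no
nonzero `z ≥ 0` satisfies `z ≤ (Bx: + B:x) z`.

That property is carried along the iteration together with the same property of `R_m` on the set
`{i | x_i = m_i}`, which `B` maps into itself. Both come from one observation: if `z ≥ 0`
satisfies `z + t Bz² ≤ (Bm: + B:m) z` on its support for some `t > 0`, then `m - s z` is a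
supersolution for small `s > 0`, so the minimality of `m` forces `z = 0`. Away from the reached
set the slack `t Bz²` comes from `m - x > 0`; on the coordinates that a step newly brings to `m`
we get `Bz² = 0`, because the step was exact there. Finally, the monotone limit of the iterates
solves the equation, so it is `m`.
-/

open Matrix

/-- `(tapp B x y) i = Σ_{j,k} B i j k * x j * y k`, the tensor–vector–vector product. -/
def tapp {n : ℕ} (B : Fin n → Fin n → Fin n → ℝ) (x y : Fin n → ℝ) : Fin n → ℝ :=
  fun i => ∑ j, ∑ k, B i j k * x j * y k

/-- The matrix `Bx:`, satisfying `(Bx:) h = B x h`; `(Bx:)_{ij} = Σ_k b_{ikj} x_k`. -/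
def matL {n : ℕ} (B : Fin n → Fin n → Fin n → ℝ) (x : Fin n → ℝ) :
    Matrix (Fin n) (Fin n) ℝ :=
  Matrix.of fun i j => ∑ k, B i k j * x k

/-- The matrix `B:x`, satisfying `(B:x) h = B h x`; `(B:x)_{ij} = Σ_k b_{ijk} x_k`. -/
def matR {n : ℕ} (B : Fin n → Fin n → Fin n → ℝ) (x : Fin n → ℝ) :
    Matrix (Fin n) (Fin n) ℝ :=
  Matrix.of fun i j => ∑ k, B i j k * x k

/-- `R_x = I − Bx: − B:x`, the negative Jacobian of `x ↦ a + Bx² − x`. -/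
def Rmat {n : ℕ} (B : Fin n → Fin n → Fin n → ℝ) (x : Fin n → ℝ) :
    Matrix (Fin n) (Fin n) ℝ :=
  1 - matL B x - matR B x

open Filter Topology

section NonnegMatrix

variable {ι : Type*} [Fintype ι] {A : Matrix ι ι ℝ}

theorem Matrix.mulVec_mono_of_nonneg (hA : ∀ i j, 0 ≤ A i j) {u v : ι → ℝ} (huv : u ≤ v) :
    A *ᵥ u ≤ A *ᵥ v := fun i =>
  Finset.sum_le_sum fun j _ => mul_le_mul_of_nonneg_left (huv j) (hA i j)

theorem Matrix.mulVec_nonneg_of_nonneg (hA : ∀ i j, 0 ≤ A i j) {v : ι → ℝ} (hv : 0 ≤ v) :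
    0 ≤ A *ᵥ v := by
  simpa using mulVec_mono_of_nonneg hA hv

/-- For `A ≥ 0` this says that the principal submatrix `A_SS` has spectral radius `< 1`
(Collatz–Wielandt). -/
def NoSubinvariantOn (A : Matrix ι ι ℝ) (S : Set ι) : Prop :=
  ∀ z : ι → ℝ, 0 ≤ z → (∀ i ∉ S, z i = 0) → z ≤ A *ᵥ z → z = 0

theorem NoSubinvariantOn.eq_zero_on {S : Set ι} (hA : ∀ i j, 0 ≤ A i j)
    (hS : ∀ i ∈ S, ∀ j, A i j ≠ 0 → j ∈ S) (hP : NoSubinvariantOn A S) {z : ι → ℝ}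
    (hz : 0 ≤ z) (hzA : ∀ i ∈ S, z i ≤ (A *ᵥ z) i) : ∀ i ∈ S, z i = 0 := by
  have hzS : 0 ≤ S.indicator z := Set.indicator_nonneg fun i _ => hz i
  have hrow : ∀ i ∈ S, (A *ᵥ S.indicator z) i = (A *ᵥ z) i := fun i hi =>
    Finset.sum_congr rfl fun j _ => by
      show A i j * _ = A i j * _
      by_cases hj : j ∈ S
      · rw [Set.indicator_of_mem hj]
      · rw [not_imp_comm.1 (hS i hi j) hj, zero_mul, zero_mul]
  have hzero : S.indicator z = 0 := by
    refine hP _ hzS (fun i hi => Set.indicator_of_notMem hi z) fun i => ?_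
    by_cases hi : i ∈ S
    · rw [Set.indicator_of_mem hi, hrow i hi]
      exact hzA i hi
    · rw [Set.indicator_of_notMem hi]
      exact mulVec_nonneg_of_nonneg hA hzS i
  intro i hi
  simpa [Set.indicator_of_mem hi] using congrFun hzero i

theorem Matrix.nonneg_of_one_sub_mulVec_nonneg [DecidableEq ι] (hA : ∀ i j, 0 ≤ A i j)
    (hP : NoSubinvariantOn A Set.univ) {w : ι → ℝ} (hw : 0 ≤ (1 - A) *ᵥ w) : 0 ≤ w := by
  -- the negative part of `w` is subinvariant
  set z : ι → ℝ := fun i => max (-w i) 0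
  have hwz : -w ≤ z := fun i => le_max_left _ _
  have hz : z ≤ A *ᵥ z := fun i => by
    refine max_le ?_ (mulVec_nonneg_of_nonneg hA (fun j => le_max_right _ _) i)
    have hwi : (A *ᵥ w) i ≤ w i := by
      simpa [sub_mulVec] using hw i
    have := mulVec_mono_of_nonneg hA hwz i
    rw [mulVec_neg] at this
    exact (neg_le_neg hwi).trans this
  have hz0 := hP z (fun i => le_max_right _ _) (fun i hi => absurd trivial hi) hz
  intro i
  simpa [z] using congrFun hz0 i

theorem Matrix.isUnit_det_one_sub [DecidableEq ι] (hA : ∀ i j, 0 ≤ A i j)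
    (hP : NoSubinvariantOn A Set.univ) : IsUnit (1 - A).det := by
  rw [isUnit_iff_ne_zero]
  intro hdet
  obtain ⟨w, hw, hw0⟩ := exists_mulVec_eq_zero_iff.2 hdet
  refine hw (le_antisymm ?_ (nonneg_of_one_sub_mulVec_nonneg hA hP hw0.ge))
  exact neg_nonneg.1 (nonneg_of_one_sub_mulVec_nonneg hA hP (by rw [mulVec_neg, hw0, neg_zero]))

theorem Matrix.inv_one_sub_nonneg [DecidableEq ι] (hA : ∀ i j, 0 ≤ A i j)
    (hP : NoSubinvariantOn A Set.univ) (i j : ι) : 0 ≤ (1 - A)⁻¹ i j := by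
  have h := nonneg_of_one_sub_mulVec_nonneg hA hP (w := (1 - A)⁻¹ *ᵥ Pi.single j 1) (by
    rw [mulVec_mulVec, mul_nonsing_inv _ (isUnit_det_one_sub hA hP), one_mulVec]
    exact Pi.single_nonneg.2 zero_le_one)
  simpa [mulVec_single_one] using h i

theorem eventually_smul_le {z d : ι → ℝ} (hd : 0 ≤ d) (hzd : ∀ i, z i ≠ 0 → 0 < d i) :
    ∀ᶠ s in 𝓝[>] (0 : ℝ), s • z ≤ d := by
  refine eventually_nhdsWithin_of_eventually_nhds (eventually_all.2 fun i => ?_)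
  by_cases hzi : z i = 0
  · simpa [hzi] using hd i
  · have hlim : Tendsto (fun s : ℝ => s * z i) (𝓝 0) (𝓝 0) := by
      simpa using (continuous_mul_const (z i)).tendsto 0
    exact hlim.eventually (ge_mem_nhds (hzd i hzi))

end NonnegMatrix

section Tensor

variable {n : ℕ} {B : Fin n → Fin n → Fin n → ℝ}

theorem tapp_add_left (u v w : Fin n → ℝ) : tapp B (u + v) w = tapp B u w + tapp B v w := by
  ext i
  simp only [tapp, Pi.add_apply, mul_add, add_mul, Finset.sum_add_distrib]

theorem tapp_add_right (u v w : Fin n → ℝ) : tapp B u (v + w) = tapp B u v + tapp B u w := by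
  ext i
  simp only [tapp, Pi.add_apply, mul_add, Finset.sum_add_distrib]

theorem tapp_smul_left (c : ℝ) (u v : Fin n → ℝ) : tapp B (c • u) v = c • tapp B u v := by
  ext i
  simp only [tapp, Pi.smul_apply, smul_eq_mul, Finset.mul_sum]
  exact Finset.sum_congr rfl fun j _ => Finset.sum_congr rfl fun k _ => by ring

theorem tapp_smul_right (c : ℝ) (u v : Fin n → ℝ) : tapp B u (c • v) = c • tapp B u v := by
  ext i
  simp only [tapp, Pi.smul_apply, smul_eq_mul, Finset.mul_sum]
  exact Finset.sum_congr rfl fun j _ => Finset.sum_congr rfl fun k _ => by ring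

@[simp]
theorem tapp_zero_left (v : Fin n → ℝ) : tapp B 0 v = 0 := by
  simpa using tapp_smul_left (B := B) 0 0 v

@[simp]
theorem tapp_zero_right (u : Fin n → ℝ) : tapp B u 0 = 0 := by
  simpa using tapp_smul_right (B := B) 0 u 0

theorem tapp_congr_row {u u' v v' : Fin n → ℝ} {i : Fin n}
    (h : ∀ j k, B i j k ≠ 0 → u j = u' j ∧ v k = v' k) : tapp B u v i = tapp B u' v' i :=
  Finset.sum_congr rfl fun j _ => Finset.sum_congr rfl fun k _ => by
    by_cases hB : B i j k = 0
    · simp [hB]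
    · rw [(h j k hB).1, (h j k hB).2]

theorem tapp_mono (hB : ∀ i j k, 0 ≤ B i j k) {u u' v v' : Fin n → ℝ} (hu : 0 ≤ u) (hv : 0 ≤ v)
    (huu' : u ≤ u') (hvv' : v ≤ v') : tapp B u v ≤ tapp B u' v' := fun i =>
  Finset.sum_le_sum fun j _ => Finset.sum_le_sum fun k _ =>
    mul_le_mul (mul_le_mul_of_nonneg_left (huu' j) (hB i j k)) (hvv' k) (hv k)
      (mul_nonneg (hB i j k) ((hu j).trans (huu' j)))

theorem tapp_nonneg (hB : ∀ i j k, 0 ≤ B i j k) {u v : Fin n → ℝ} (hu : 0 ≤ u) (hv : 0 ≤ v) :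
    0 ≤ tapp B u v := by
  simpa using tapp_mono hB le_rfl le_rfl hu hv

theorem Filter.Tendsto.tapp {α : Type*} {l : Filter α} {u v : α → Fin n → ℝ}
    {x y : Fin n → ℝ} (hu : Tendsto u l (𝓝 x)) (hv : Tendsto v l (𝓝 y)) :
    Tendsto (fun t => _root_.tapp B (u t) (v t)) l (𝓝 (_root_.tapp B x y)) :=
  tendsto_pi_nhds.2 fun _ => tendsto_finsetSum _ fun j _ => tendsto_finsetSum _ fun k _ =>
    ((tendsto_pi_nhds.1 hu j).const_mul _).mul (tendsto_pi_nhds.1 hv k)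

end Tensor

section QuadraticEquation

variable {n : ℕ} {a m : Fin n → ℝ} {B : Fin n → Fin n → Fin n → ℝ}

/-- `Bx: + B:x`, the Jacobian of `x ↦ Bx²`. -/
def quadDeriv (B : Fin n → Fin n → Fin n → ℝ) (x : Fin n → ℝ) : Matrix (Fin n) (Fin n) ℝ :=
  matL B x + matR B x

/-- The paper's `F(x)`. -/
def quadResidual (a : Fin n → ℝ) (B : Fin n → Fin n → Fin n → ℝ) (x : Fin n → ℝ) : Fin n → ℝ :=
  a + tapp B x x - x

noncomputable def newtonStep (a : Fin n → ℝ) (B : Fin n → Fin n → Fin n → ℝ) (x : Fin n → ℝ) :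
    Fin n → ℝ :=
  x + (Rmat B x)⁻¹ *ᵥ quadResidual a B x

structure IsPosMinimalSolution (a : Fin n → ℝ) (B : Fin n → Fin n → Fin n → ℝ) (m : Fin n → ℝ) :
    Prop where
  a_nonneg : 0 ≤ a
  B_nonneg : ∀ i j k, 0 ≤ B i j k
  pos : ∀ i, 0 < m i
  eq : m = a + tapp B m m
  minimal : ∀ x, 0 ≤ x → x = a + tapp B x x → m ≤ x

theorem matL_mulVec (x h : Fin n → ℝ) : matL B x *ᵥ h = tapp B x h := by
  ext i
  simp only [matL, mulVec, dotProduct, tapp, of_apply, Finset.sum_mul]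
  exact Finset.sum_comm

theorem matR_mulVec (x h : Fin n → ℝ) : matR B x *ᵥ h = tapp B h x := by
  ext i
  simp only [matR, mulVec, dotProduct, tapp, of_apply, Finset.sum_mul]
  exact Finset.sum_congr rfl fun j _ => Finset.sum_congr rfl fun k _ => by ring

theorem quadDeriv_mulVec (x h : Fin n → ℝ) : quadDeriv B x *ᵥ h = tapp B x h + tapp B h x := by
  rw [quadDeriv, add_mulVec, matL_mulVec, matR_mulVec]

theorem quadDeriv_add_mulVec (x d h : Fin n → ℝ) :
    quadDeriv B (x + d) *ᵥ h = quadDeriv B x *ᵥ h + (tapp B d h + tapp B h d) := by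
  simp only [quadDeriv_mulVec, tapp_add_left, tapp_add_right]
  abel

theorem quadDeriv_nonneg (hB : ∀ i j k, 0 ≤ B i j k) {x : Fin n → ℝ} (hx : 0 ≤ x) (i j : Fin n) :
    0 ≤ quadDeriv B x i j :=
  show 0 ≤ (∑ k, B i k j * x k) + ∑ k, B i j k * x k from
    add_nonneg (Finset.sum_nonneg fun k _ => mul_nonneg (hB i k j) (hx k))
      (Finset.sum_nonneg fun k _ => mul_nonneg (hB i j k) (hx k))

theorem Rmat_eq_one_sub_quadDeriv (x : Fin n → ℝ) : Rmat B x = 1 - quadDeriv B x :=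
  sub_sub _ _ _

theorem Rmat_mulVec (x h : Fin n → ℝ) : Rmat B x *ᵥ h = h - (tapp B x h + tapp B h x) := by
  rw [Rmat_eq_one_sub_quadDeriv, sub_mulVec, one_mulVec, quadDeriv_mulVec]

theorem quadResidual_add (x h : Fin n → ℝ) :
    quadResidual a B (x + h) = quadResidual a B x - Rmat B x *ᵥ h + tapp B h h := by
  simp only [quadResidual, Rmat_mulVec, tapp_add_left, tapp_add_right]
  abel

theorem quadResidual_eq_zero (hmsol : m = a + tapp B m m) : quadResidual a B m = 0 := by
  rw [quadResidual, ← hmsol, sub_self]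

theorem le_of_supersolution (ha : 0 ≤ a) (hB : ∀ i j k, 0 ≤ B i j k)
    (hmin : ∀ x, 0 ≤ x → x = a + tapp B x x → m ≤ x) {w : Fin n → ℝ} (hw : 0 ≤ w)
    (hsup : a + tapp B w w ≤ w) : m ≤ w := by
  set g : (Fin n → ℝ) → Fin n → ℝ := fun z => a + tapp B z z
  have hg : ∀ {u v}, 0 ≤ u → u ≤ v → g u ≤ g v := fun hu huv =>
    add_le_add_right (tapp_mono hB hu hu huv huv) a
  have hg0 : g 0 = a := by simp [g]
  -- the fixed-point iteration from `0` increases towards a solution below `w`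
  set z : ℕ → Fin n → ℝ := fun r => g^[r] 0
  have hz_succ : ∀ r, z (r + 1) = g (z r) := fun r => Function.iterate_succ_apply' g r 0
  have hzw : ∀ r, 0 ≤ z r ∧ z r ≤ w := by
    intro r
    induction r with
    | zero => exact ⟨le_rfl, hw⟩
    | succ r ih =>
      rw [hz_succ]
      exact ⟨(ha.trans_eq hg0.symm).trans (hg le_rfl ih.1), (hg ih.1 ih.2).trans hsup⟩
  have hmono : Monotone z := by
    refine monotone_nat_of_le_succ fun r => ?_
    induction r with
    | zero => exact (hzw 1).1
    | succ r ih => rw [hz_succ (r + 1), hz_succ r]; exact hg (hzw r).1 (hz_succ r ▸ ih)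
  have hlim := tendsto_atTop_ciSup hmono ⟨w, Set.forall_mem_range.2 fun r => (hzw r).2⟩
  set L := ⨆ r, z r
  have hL : L = g L := by
    refine tendsto_nhds_unique (hlim.comp (tendsto_add_atTop_nat 1)) ?_
    simp only [Function.comp_def, hz_succ]
    exact tendsto_const_nhds.add (hlim.tapp hlim)
  have hL0 : 0 ≤ L := (hzw 0).1.trans (hmono.ge_of_tendsto hlim 0)
  exact (hmin L hL0 hL).trans (le_of_tendsto' hlim fun r => (hzw r).2)

theorem IsPosMinimalSolution.eq_zero_of_add_tapp_le (hm : IsPosMinimalSolution a B m)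
    {z : Fin n → ℝ} (hz : 0 ≤ z) {t : ℝ} (ht : 0 < t)
    (hzt : ∀ i, 0 < z i → z i + t * tapp B z z i ≤ (quadDeriv B m *ᵥ z) i) : z = 0 := by
  obtain ⟨s, ⟨hsm, hst⟩, hs0 : 0 < s⟩ := ((eventually_smul_le (z := z)
    (fun i => (hm.pos i).le) fun i _ => hm.pos i).and
    (eventually_nhdsWithin_of_eventually_nhds (ge_mem_nhds ht))).and
    self_mem_nhdsWithin |>.exists
  have hres : quadResidual a B (m - s • z) = s • (z - quadDeriv B m *ᵥ z + s • tapp B z z) := by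
    rw [sub_eq_add_neg, quadResidual_add, quadResidual_eq_zero hm.eq, Rmat_eq_one_sub_quadDeriv,
      ← neg_smul, tapp_smul_left, tapp_smul_right, sub_mulVec, one_mulVec, mulVec_smul]
    module
  have hsup : a + tapp B (m - s • z) (m - s • z) ≤ m - s • z := fun i => by
    have hi := congrFun hres i
    simp only [quadResidual, Pi.sub_apply, Pi.add_apply, Pi.smul_apply, smul_eq_mul] at hi ⊢
    suffices z i - (quadDeriv B m *ᵥ z) i + s * tapp B z z i ≤ 0 by
      linarith [mul_nonpos_of_nonneg_of_nonpos hs0.le this]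
    have hzz := tapp_nonneg hm.B_nonneg hz hz i
    rcases (hz i).lt_or_eq with hzi | hzi
    · linarith [hzt i hzi, mul_le_mul_of_nonneg_right hst hzz]
    · -- off the support of `z`, the term `s Bz²` is absorbed by `B m z` since `s z ≤ m`
      have hszm := tapp_mono hm.B_nonneg (smul_nonneg hs0.le hz) hz hsm le_rfl i
      rw [tapp_smul_left, Pi.smul_apply, smul_eq_mul] at hszm
      rw [quadDeriv_mulVec, Pi.add_apply, ← hzi]
      linarith [tapp_nonneg hm.B_nonneg hz (fun i => (hm.pos i).le) i]
  have hmz := le_of_supersolution hm.a_nonneg hm.B_nonneg hm.minimal (sub_nonneg.2 hsm) hsup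
  have hsz : s • z ≤ s • 0 := by simpa using hmz
  exact le_antisymm ((smul_le_smul_iff_of_pos_left hs0).1 hsz) hz

theorem reached_closed (hB : ∀ i j k, 0 ≤ B i j k) (hmpos : ∀ i, 0 < m i)
    (hmsol : m = a + tapp B m m) {x : Fin n → ℝ} (hx0 : 0 ≤ x) (hxm : x ≤ m)
    (hF : 0 ≤ quadResidual a B x) {i j k : Fin n} (hi : x i = m i) (hijk : B i j k ≠ 0) :
    x j = m j ∧ x k = m k := by
  have hterm : ∀ j k, B i j k * x j * x k ≤ B i j k * m j * m k := fun j k =>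
    mul_le_mul (mul_le_mul_of_nonneg_left (hxm j) (hB i j k)) (hxm k) (hx0 k)
      (mul_nonneg (hB i j k) ((hx0 j).trans (hxm j)))
  -- `F(x)_i ≥ 0 = F(m)_i` forces equality in every term of `(Bx²)_i ≤ (Bm²)_i`
  have hsum : tapp B x x i = tapp B m m i := by
    refine le_antisymm (tapp_mono hB hx0 hx0 hxm hxm i) ?_
    have h1 := hF i
    have h2 := congrFun hmsol i
    simp only [quadResidual, Pi.sub_apply, Pi.add_apply, Pi.zero_apply] at h1 h2
    linarith
  have heq : B i j k * x j * x k = B i j k * m j * m k := by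
    have h := (Finset.sum_eq_sum_iff_of_le fun j _ => Finset.sum_le_sum fun k _ =>
      hterm j k).1 hsum j (Finset.mem_univ _)
    exact (Finset.sum_eq_sum_iff_of_le fun k _ => hterm j k).1 h k (Finset.mem_univ _)
  rw [mul_assoc, mul_assoc] at heq
  have hxx := mul_left_cancel₀ hijk heq
  exact ⟨le_antisymm (hxm j) (not_lt.1 fun h => by
      nlinarith [mul_pos (sub_pos.2 h) (hmpos k), mul_nonneg (hx0 j) (sub_nonneg.2 (hxm k))]),
    le_antisymm (hxm k) (not_lt.1 fun h => by
      nlinarith [mul_pos (hmpos j) (sub_pos.2 h), mul_nonneg (sub_nonneg.2 (hxm j)) (hx0 k)])⟩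

theorem reached_closed_quadDeriv (hB : ∀ i j k, 0 ≤ B i j k) (hmpos : ∀ i, 0 < m i)
    (hmsol : m = a + tapp B m m) {x : Fin n → ℝ} (hx0 : 0 ≤ x) (hxm : x ≤ m)
    (hF : 0 ≤ quadResidual a B x) (w : Fin n → ℝ) {i j : Fin n} (hi : x i = m i)
    (hij : quadDeriv B w i j ≠ 0) : x j = m j := by
  by_contra hj
  refine hij (show (∑ k, B i k j * w k) + ∑ k, B i j k * w k = 0 from ?_)
  rw [Finset.sum_eq_zero fun k _ => mul_eq_zero_of_left (not_not.1 fun hb =>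
      hj (reached_closed hB hmpos hmsol hx0 hxm hF hi hb).2) _,
    Finset.sum_eq_zero fun k _ => mul_eq_zero_of_left (not_not.1 fun hb =>
      hj (reached_closed hB hmpos hmsol hx0 hxm hF hi hb).1) _, add_zero]

section NewtonStep

variable {x : Fin n → ℝ}

theorem Rmat_mulVec_newtonStep_sub (hunit : IsUnit (Rmat B x).det) :
    Rmat B x *ᵥ (newtonStep a B x - x) = quadResidual a B x := by
  rw [newtonStep, add_sub_cancel_left, mulVec_mulVec, mul_nonsing_inv _ hunit, one_mulVec]

theorem quadResidual_newtonStep (hunit : IsUnit (Rmat B x).det) :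
    quadResidual a B (newtonStep a B x) =
      tapp B (newtonStep a B x - x) (newtonStep a B x - x) := by
  conv_lhs => rw [← add_sub_cancel x (newtonStep a B x)]
  rw [quadResidual_add, Rmat_mulVec_newtonStep_sub hunit, sub_self, zero_add]

theorem Rmat_mulVec_sub_newtonStep (hmsol : m = a + tapp B m m)
    (hunit : IsUnit (Rmat B x).det) :
    Rmat B x *ᵥ (m - newtonStep a B x) = tapp B (m - x) (m - x) := by
  have h := quadResidual_add (a := a) (B := B) x (m - x)
  rw [add_sub_cancel, quadResidual_eq_zero hmsol] at h
  rw [← sub_sub_sub_cancel_right m (newtonStep a B x) x, mulVec_sub,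
    Rmat_mulVec_newtonStep_sub hunit]
  linear_combination h

end NewtonStep

/-- Its last field says that `R_m` is a nonsingular M-matrix on the coordinates where `x` has
reached `m`. -/
structure NewtonInvariant (a : Fin n → ℝ) (B : Fin n → Fin n → Fin n → ℝ) (m x : Fin n → ℝ) :
    Prop where
  nonneg : 0 ≤ x
  le : x ≤ m
  quadResidual_nonneg : 0 ≤ quadResidual a B x
  noSubinvariantOn : NoSubinvariantOn (quadDeriv B m) {i | x i = m i}

namespace NewtonInvariant

theorem zero (ha : 0 ≤ a) (hmpos : ∀ i, 0 < m i) : NewtonInvariant a B m 0 where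
  nonneg := le_rfl
  le i := (hmpos i).le
  quadResidual_nonneg := by simpa [quadResidual] using ha
  noSubinvariantOn _ _ hz _ := funext fun i => hz i (hmpos i).ne

variable {x : Fin n → ℝ}

theorem eq_zero_on_reached (hB : ∀ i j k, 0 ≤ B i j k) (hmpos : ∀ i, 0 < m i)
    (hmsol : m = a + tapp B m m) (hx : NewtonInvariant a B m x) {z : Fin n → ℝ} (hz : 0 ≤ z)
    (hzN : ∀ i, x i = m i → z i ≤ (quadDeriv B m *ᵥ z) i) : ∀ i, x i = m i → z i = 0 :=
  hx.noSubinvariantOn.eq_zero_on (quadDeriv_nonneg hB fun i => (hmpos i).le)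
    (fun _ hi _ hj => reached_closed_quadDeriv hB hmpos hmsol hx.nonneg hx.le
      hx.quadResidual_nonneg m hi hj) hz hzN

theorem noSubinvariantOn_quadDeriv (hm : IsPosMinimalSolution a B m)
    (hx : NewtonInvariant a B m x) : NoSubinvariantOn (quadDeriv B x) Set.univ := by
  intro z hz _ hzN
  have hclosed : ∀ {i j k}, x i = m i → B i j k ≠ 0 → x j = m j ∧ x k = m k :=
    reached_closed hm.B_nonneg hm.pos hm.eq hx.nonneg hx.le hx.quadResidual_nonneg
  have hrow : ∀ i, x i = m i → (quadDeriv B x *ᵥ z) i = (quadDeriv B m *ᵥ z) i := fun i hi => by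
    simp only [quadDeriv_mulVec, Pi.add_apply]
    congr 1
    · exact tapp_congr_row fun j k hjk => ⟨(hclosed hi hjk).1, rfl⟩
    · exact tapp_congr_row fun j k hjk => ⟨rfl, (hclosed hi hjk).2⟩
  have hZ := hx.eq_zero_on_reached hm.B_nonneg hm.pos hm.eq hz fun i hi =>
    (hzN i).trans_eq (hrow i hi)
  -- so `z` is dominated by a multiple of `m - x`, which provides the slack
  obtain ⟨s, hsd, hs0 : 0 < s⟩ := ((eventually_smul_le (z := z) (sub_nonneg.2 hx.le)
    fun i hzi => sub_pos.2 ((hx.le i).lt_of_ne fun h => hzi (hZ i h))).and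
    self_mem_nhdsWithin).exists
  refine hm.eq_zero_of_add_tapp_le hz hs0 fun i _ => ?_
  have hdz := tapp_mono hm.B_nonneg (smul_nonneg hs0.le hz) hz hsd le_rfl i
  have hzd := tapp_nonneg hm.B_nonneg hz (sub_nonneg.2 hx.le) i
  have hNm := congrFun (quadDeriv_add_mulVec (B := B) x (m - x) z) i
  rw [add_sub_cancel] at hNm
  rw [tapp_smul_left] at hdz
  simp only [Pi.add_apply, Pi.smul_apply, smul_eq_mul, Pi.zero_apply] at hNm hdz hzd
  linarith [hzN i]

theorem isUnit_det_Rmat (hm : IsPosMinimalSolution a B m) (hx : NewtonInvariant a B m x) :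
    IsUnit (Rmat B x).det := by
  rw [Rmat_eq_one_sub_quadDeriv]
  exact isUnit_det_one_sub (quadDeriv_nonneg hm.B_nonneg hx.nonneg)
    (hx.noSubinvariantOn_quadDeriv hm)

theorem inv_Rmat_nonneg (hm : IsPosMinimalSolution a B m) (hx : NewtonInvariant a B m x)
    (i j : Fin n) : 0 ≤ (Rmat B x)⁻¹ i j := by
  rw [Rmat_eq_one_sub_quadDeriv]
  exact inv_one_sub_nonneg (quadDeriv_nonneg hm.B_nonneg hx.nonneg)
    (hx.noSubinvariantOn_quadDeriv hm) i j

theorem nonneg_of_Rmat_mulVec_nonneg (hm : IsPosMinimalSolution a B m)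
    (hx : NewtonInvariant a B m x) {w : Fin n → ℝ} (hw : 0 ≤ Rmat B x *ᵥ w) : 0 ≤ w := by
  rw [Rmat_eq_one_sub_quadDeriv] at hw
  exact nonneg_of_one_sub_mulVec_nonneg (quadDeriv_nonneg hm.B_nonneg hx.nonneg)
    (hx.noSubinvariantOn_quadDeriv hm) hw

theorem le_newtonStep (hm : IsPosMinimalSolution a B m) (hx : NewtonInvariant a B m x) :
    x ≤ newtonStep a B x :=
  sub_nonneg.1 <| hx.nonneg_of_Rmat_mulVec_nonneg hm <|
    (Rmat_mulVec_newtonStep_sub (hx.isUnit_det_Rmat hm)).symm ▸ hx.quadResidual_nonneg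

theorem newtonStep_le (hm : IsPosMinimalSolution a B m) (hx : NewtonInvariant a B m x) :
    newtonStep a B x ≤ m :=
  sub_nonneg.1 <| hx.nonneg_of_Rmat_mulVec_nonneg hm <|
    (Rmat_mulVec_sub_newtonStep hm.eq (hx.isUnit_det_Rmat hm)).symm ▸
      tapp_nonneg hm.B_nonneg (sub_nonneg.2 hx.le) (sub_nonneg.2 hx.le)

theorem noSubinvariantOn_newtonStep (hm : IsPosMinimalSolution a B m)
    (hx : NewtonInvariant a B m x) :
    NoSubinvariantOn (quadDeriv B m) {i | newtonStep a B x i = m i} := by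
  intro z hz hzZ hzN
  set y := newtonStep a B x
  have hd : 0 ≤ m - x := sub_nonneg.2 hx.le
  have hym : 0 ≤ m - y := sub_nonneg.2 (hx.newtonStep_le hm)
  have hZ := hx.eq_zero_on_reached hm.B_nonneg hm.pos hm.eq hz fun i _ => hzN i
  -- where `y` has reached `m` the step was exact: there `R_x (m - y) = B(m - x)²` vanishes
  have hBdd : ∀ i, y i = m i → tapp B (m - x) (m - x) i = 0 := fun i hi => by
    have h := congrFun (Rmat_mulVec_sub_newtonStep hm.eq (hx.isUnit_det_Rmat hm)) i
    rw [Rmat_mulVec] at h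
    have h1 := tapp_nonneg hm.B_nonneg hx.nonneg hym i
    have h2 := tapp_nonneg hm.B_nonneg hym hx.nonneg i
    simp only [Pi.sub_apply, Pi.add_apply, Pi.zero_apply] at h h1 h2
    exact le_antisymm (by linarith) (tapp_nonneg hm.B_nonneg hd hd i)
  obtain ⟨s, hsd, hs0 : 0 < s⟩ := ((eventually_smul_le (z := z) hd fun i hzi =>
    sub_pos.2 ((hx.le i).lt_of_ne fun h => hzi (hZ i h))).and self_mem_nhdsWithin).exists
  refine hm.eq_zero_of_add_tapp_le hz one_pos fun i hzi => ?_
  have hyi : y i = m i := not_not.1 fun h => hzi.ne' (hzZ i h)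
  have hss := tapp_mono hm.B_nonneg (smul_nonneg hs0.le hz) (smul_nonneg hs0.le hz) hsd hsd i
  rw [hBdd i hyi, tapp_smul_left, tapp_smul_right, smul_smul] at hss
  have hzz : tapp B z z i = 0 := le_antisymm
    (nonpos_of_mul_nonpos_right hss (mul_pos hs0 hs0)) (tapp_nonneg hm.B_nonneg hz hz i)
  rw [hzz, mul_zero, add_zero]
  exact hzN i

theorem step (hm : IsPosMinimalSolution a B m) (hx : NewtonInvariant a B m x) :
    NewtonInvariant a B m (newtonStep a B x) where
  nonneg := hx.nonneg.trans (hx.le_newtonStep hm)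
  le := hx.newtonStep_le hm
  quadResidual_nonneg := quadResidual_newtonStep (hx.isUnit_det_Rmat hm) ▸
    tapp_nonneg hm.B_nonneg (sub_nonneg.2 (hx.le_newtonStep hm))
      (sub_nonneg.2 (hx.le_newtonStep hm))
  noSubinvariantOn := hx.noSubinvariantOn_newtonStep hm

end NewtonInvariant

theorem tendsto_of_quadResidual_eq_Rmat_mulVec
    (hmin : ∀ x, 0 ≤ x → x = a + tapp B x x → m ≤ x) {x : ℕ → Fin n → ℝ} (hx0 : 0 ≤ x 0)
    (hmono : Monotone x) (hxm : ∀ k, x k ≤ m)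
    (hres : ∀ k, quadResidual a B (x k) = Rmat B (x k) *ᵥ (x (k + 1) - x k)) :
    Tendsto x atTop (𝓝 m) := by
  have hlim := tendsto_atTop_ciSup hmono ⟨m, Set.forall_mem_range.2 hxm⟩
  set L := ⨆ k, x k
  have hδ : Tendsto (fun k => x (k + 1) - x k) atTop (𝓝 0) := by
    simpa using (hlim.comp (tendsto_add_atTop_nat 1)).sub hlim
  have hresL : quadResidual a B L = 0 := by
    refine tendsto_nhds_unique ((tendsto_const_nhds.add (hlim.tapp hlim)).sub hlim) ?_
    change Tendsto (fun k => quadResidual a B (x k)) atTop (𝓝 0)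
    simp only [hres, Rmat_mulVec]
    simpa using hδ.sub ((hlim.tapp hδ).add (hδ.tapp hlim))
  have hmL := hmin L (hx0.trans (hmono.ge_of_tendsto hlim 0)) (sub_eq_zero.1 hresL).symm
  rwa [le_antisymm (le_of_tendsto' hlim hxm) hmL] at hlim

end QuadraticEquation

/-- The Newton iteration started from `0` is well defined, monotonically increasing,
keeps a nonnegative residual, and converges to the minimal nonnegative solution `m`
of `x = a + Bx²` (part of Theorem `thm.21` in the paper). Here `(Rmat B (x k))⁻¹`
is Mathlib's total matrix inverse; well-definedness is asserted by
`IsUnit (Rmat B (x k)).det` together with nonnegativity of the inverse. -/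
theorem newton_iteration_minimal_solution
    {n : ℕ} (a : Fin n → ℝ) (B : Fin n → Fin n → Fin n → ℝ)
    (ha : ∀ i, 0 ≤ a i) (hB : ∀ i j k, 0 ≤ B i j k)
    (m : Fin n → ℝ)
    (hmpos : ∀ i, 0 < m i)
    (hmsol : m = a + tapp B m m)
    (hmin : ∀ x : Fin n → ℝ, (∀ i, 0 ≤ x i) → x = a + tapp B x x → ∀ i, m i ≤ x i)
    (x : ℕ → (Fin n → ℝ))
    (hx0 : x 0 = 0)
    (hxs : ∀ k, x (k + 1) = x k + (Rmat B (x k))⁻¹ *ᵥ (a + tapp B (x k) (x k) - x k)) :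
    (∀ k, IsUnit (Rmat B (x k)).det) ∧
    (∀ k i j, 0 ≤ (Rmat B (x k))⁻¹ i j) ∧
    (∀ k i, 0 ≤ (a + tapp B (x k) (x k) - x k) i) ∧
    (∀ k i, x k i ≤ x (k + 1) i) ∧
    (∀ k i, x k i ≤ m i) ∧
    Filter.Tendsto x Filter.atTop (nhds m) := by
  have hm : IsPosMinimalSolution a B m := ⟨ha, hB, hmpos, hmsol, hmin⟩
  have hxs' : ∀ k, x (k + 1) = newtonStep a B (x k) := hxs
  have hI : ∀ k, NewtonInvariant a B m (x k) := by
    intro k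
    induction k with
    | zero => exact hx0 ▸ NewtonInvariant.zero ha hmpos
    | succ k ih => exact hxs' k ▸ ih.step hm
  have hmono : ∀ k, x k ≤ x (k + 1) := fun k => hxs' k ▸ (hI k).le_newtonStep hm
  refine ⟨fun k => (hI k).isUnit_det_Rmat hm, fun k => (hI k).inv_Rmat_nonneg hm,
    fun k => (hI k).quadResidual_nonneg, hmono, fun k => (hI k).le, ?_⟩
  refine tendsto_of_quadResidual_eq_Rmat_mulVec hmin (hI 0).nonneg
    (monotone_nat_of_le_succ hmono) (fun k => (hI k).le) fun k => ?_
  rw [hxs' k, Rmat_mulVec_newtonStep_sub ((hI k).isUnit_det_Rmat hm)]
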